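/- Let H be a Hilbert space, A : dom(A) ⊆ H → H densely defined and closed, and S ∈ L(H) with S[dom(A)] ⊆ dom(A) and [S,A] := SA − AS continuous on dom(A). Then S* leaves dom(A*) invariant and cl([A*, S*]) = cl([S,A])*. -/

import Mathlib

/-!
For `x ∈ dom A`, pairing the commutator identity `T x = S (A x) - A (S x)` with `v ∈ dom A*`
gives `⟪T* v + S* (A* v), x⟫ = ⟪S* v, A x⟫`; this says at once that `S* v ∈ dom A*` and
`A* (S* v) = T* v + S* (A* v)`.

Density of `dom A*` holds for every closed `A`: the second component of any vector orthogonal to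
the graph of `A` lies in `dom A*`, so if `y ⊥ dom A*` then `(0, y)` lies in the double orthogonal
complement of the graph, which is the graph itself, and hence `y = 0`.
-/

namespace LinearPMap

open scoped LinearPMap

variable {𝕜 E F : Type*} [RCLike 𝕜] [NormedAddCommGroup E] [InnerProductSpace 𝕜 E]
  [NormedAddCommGroup F] [InnerProductSpace 𝕜 F]

/-- `E × F` itself carries the sup norm and no inner product. -/
def graphL2 (T : E →ₗ.[𝕜] F) : Submodule 𝕜 (WithLp 2 (E × F)) :=
  T.graph.comap (WithLp.linearEquiv 2 𝕜 (E × F)).toLinearMap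

theorem IsClosed.isClosed_graphL2 {T : E →ₗ.[𝕜] F} (hT : T.IsClosed) :
    _root_.IsClosed (T.graphL2 : Set (WithLp 2 (E × F))) :=
  hT.preimage (WithLp.prod_continuous_ofLp 2 E F)

theorem snd_mem_adjoint_domain_of_mem_orthogonal_graphL2 [CompleteSpace E]
    {T : E →ₗ.[𝕜] F} {z : WithLp 2 (E × F)} (hz : z ∈ T.graphL2ᗮ) : z.ofLp.2 ∈ T†.domain := by
  refine T.mem_adjoint_domain_of_exists _ ⟨-z.ofLp.1, fun x => ?_⟩
  have hx := (Submodule.mem_orthogonal' _ z).mp hz (WithLp.toLp 2 ((x : E), T x)) (T.mem_graph x)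
  rw [WithLp.prod_inner_apply] at hx
  rwa [inner_neg_left, neg_eq_iff_add_eq_zero]

theorem IsClosed.dense_adjoint_domain [CompleteSpace E] [CompleteSpace F] {T : E →ₗ.[𝕜] F}
    (hT : T.IsClosed) : Dense (T†.domain : Set F) := by
  rw [Submodule.dense_iff_topologicalClosure_eq_top, Submodule.topologicalClosure_eq_top_iff,
    Submodule.eq_bot_iff]
  intro y hy
  have hy_graph : WithLp.toLp 2 ((0 : E), y) ∈ T.graphL2 := by
    rw [← hT.isClosed_graphL2.submodule_topologicalClosure_eq,
      ← Submodule.orthogonal_orthogonal_eq_closure, Submodule.mem_orthogonal']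
    intro z hz
    rw [WithLp.prod_inner_apply, inner_zero_left, zero_add]
    exact (Submodule.mem_orthogonal' _ y).mp hy _
      (snd_mem_adjoint_domain_of_mem_orthogonal_graphL2 hz)
  exact T.graph_fst_eq_zero_snd hy_graph rfl

theorem inner_adjoint_add_adjoint_comp_adjoint_of_commutator [CompleteSpace E]
    {A : E →ₗ.[𝕜] E} (hA : Dense (A.domain : Set E)) {S T : E →L[𝕜] E}
    (hSA : ∀ x ∈ A.domain, S x ∈ A.domain)
    (hT : ∀ x : A.domain, T x = S (A x) - A ⟨S x, hSA x x.2⟩) (v : A†.domain) (x : A.domain) :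
    inner 𝕜 (T.adjoint v + S.adjoint (A† v)) (x : E) = inner 𝕜 (S.adjoint v) (A x) := by
  rw [inner_add_left, ContinuousLinearMap.adjoint_inner_left,
    ContinuousLinearMap.adjoint_inner_left, ContinuousLinearMap.adjoint_inner_left,
    adjoint_isFormalAdjoint hA v ⟨S x, hSA x x.2⟩, hT x, ← inner_add_right, sub_add_cancel]

end LinearPMap

/-- for `A` densely defined closed and `S` bounded leaving `dom A`
invariant with continuous commutator `[S,A]` (continuous extension `T`), the adjoint `S*`
leaves `dom A*` invariant and `cl([A*, S*]) = cl([S,A])*`, i.e. `T*` agrees on the (dense)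
domain of `A*` with `A*S* - S*A*`. -/
theorem adjoint_commutator_S_A
    {H : Type*} [NormedAddCommGroup H] [InnerProductSpace ℝ H] [CompleteSpace H]
    (A : H →ₗ.[ℝ] H) (hAdense : Dense (A.domain : Set H)) (hAclosed : A.IsClosed)
    (S : H →L[ℝ] H) (hSA : ∀ x ∈ A.domain, S x ∈ A.domain)
    (T : H →L[ℝ] H)
    (hT : ∀ x : A.domain, T (x : H) = S (A x) - A ⟨S (x : H), hSA x x.2⟩) :
    Dense (A.adjoint.domain : Set H) ∧
      ∀ v : A.adjoint.domain,
        ∃ h : ContinuousLinearMap.adjoint S (v : H) ∈ A.adjoint.domain,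
          ContinuousLinearMap.adjoint T (v : H) =
            A.adjoint ⟨ContinuousLinearMap.adjoint S (v : H), h⟩ -
              ContinuousLinearMap.adjoint S (A.adjoint v) := by
  refine ⟨hAclosed.dense_adjoint_domain, fun v => ?_⟩
  have hinner := LinearPMap.inner_adjoint_add_adjoint_comp_adjoint_of_commutator hAdense hSA hT v
  refine ⟨A.mem_adjoint_domain_of_exists _ ⟨_, hinner⟩, ?_⟩
  rw [LinearPMap.adjoint_apply_eq hAdense _ hinner, add_sub_cancel_right]
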